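/- arXiv:1506.08752 — 10 statements merged into one kernel-verified Lean document; each statement's English description precedes it below -/
import Mathlib

section
/- Let ρ > 0 and let α, β, θ₂ be smooth functions of a parameter t satisfying 2ρ·sin(α(t)) + ρ = 2ρ·sin(β(t)) + ρ·cos(θ₂(t)) + ȳ and 2ρ·cos(α(t)) + 2ρ·cos(β(t)) + ρ·sin(θ₂(t)) = x̄ for constants x̄, ȳ, with θ₂'(t) = 1. Then whenever sin(α + β) ≠ 0, β' = cos(θ₂ − α)/(2 sin(α + β)) and α' = cos(θ₂ + β)/(2 sin(α + β)). -/
open Real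

/-- LRL Dubins path geometry: implicit differentiation of the closure equations
gives the derivatives of the auxiliary angles α and β. -/
theorem lrl_implicit_derivatives
    (ρ xbar ybar : ℝ) (hρ : 0 < ρ)
    (α β θ₂ : ℝ → ℝ) (α' β' θ₂' : ℝ → ℝ)
    (hα : ∀ t, HasDerivAt α (α' t) t)
    (hβ : ∀ t, HasDerivAt β (β' t) t)
    (hθ₂ : ∀ t, HasDerivAt θ₂ (θ₂' t) t)
    (hθ₂' : ∀ t, θ₂' t = 1)
    (hc1 : ∀ t, 2 * ρ * Real.sin (α t) + ρ =
      2 * ρ * Real.sin (β t) + ρ * Real.cos (θ₂ t) + ybar)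
    (hc2 : ∀ t, 2 * ρ * Real.cos (α t) + 2 * ρ * Real.cos (β t) + ρ * Real.sin (θ₂ t) = xbar) :
    ∀ t, Real.sin (α t + β t) ≠ 0 →
      β' t = Real.cos (θ₂ t - α t) / (2 * Real.sin (α t + β t)) ∧
      α' t = Real.cos (θ₂ t + β t) / (2 * Real.sin (α t + β t)) := by
  intro t hs
  -- derivative of the first constraint
  have D1 : HasDerivAt (fun t => 2 * ρ * Real.sin (α t) + ρ -
      (2 * ρ * Real.sin (β t) + ρ * Real.cos (θ₂ t) + ybar))
      (2 * ρ * (Real.cos (α t) * α' t) -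
       (2 * ρ * (Real.cos (β t) * β' t) + ρ * (-Real.sin (θ₂ t) * θ₂' t))) t := by
    exact ((((hα t).sin.const_mul (2*ρ)).add_const ρ).sub
      ((((hβ t).sin.const_mul (2*ρ)).add ((hθ₂ t).cos.const_mul ρ)).add_const ybar))
  have E1 : (fun t => 2 * ρ * Real.sin (α t) + ρ -
      (2 * ρ * Real.sin (β t) + ρ * Real.cos (θ₂ t) + ybar)) = fun _ => (0:ℝ) := by
    funext s; have := hc1 s; linarith
  rw [E1] at D1
  have h1 : 2 * ρ * (Real.cos (α t) * α' t) -
       (2 * ρ * (Real.cos (β t) * β' t) + ρ * (-Real.sin (θ₂ t) * θ₂' t)) = 0 :=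
    D1.unique (hasDerivAt_const t 0)
  -- derivative of the second constraint
  have D2 : HasDerivAt (fun t => 2 * ρ * Real.cos (α t) + 2 * ρ * Real.cos (β t) +
      ρ * Real.sin (θ₂ t))
      (2 * ρ * (-Real.sin (α t) * α' t) + 2 * ρ * (-Real.sin (β t) * β' t) +
       ρ * (Real.cos (θ₂ t) * θ₂' t)) t := by
    exact (((hα t).cos.const_mul (2*ρ)).add ((hβ t).cos.const_mul (2*ρ))).add
      ((hθ₂ t).sin.const_mul ρ)
  have E2 : (fun t => 2 * ρ * Real.cos (α t) + 2 * ρ * Real.cos (β t) +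
      ρ * Real.sin (θ₂ t)) = fun _ => xbar := by
    funext s; exact hc2 s
  rw [E2] at D2
  have h2 : 2 * ρ * (-Real.sin (α t) * α' t) + 2 * ρ * (-Real.sin (β t) * β' t) +
       ρ * (Real.cos (θ₂ t) * θ₂' t) = 0 :=
    D2.unique (hasDerivAt_const t xbar)
  rw [hθ₂' t] at h1 h2
  have hρ' : ρ ≠ 0 := ne_of_gt hρ
  have h1' : 2 * Real.cos (α t) * α' t - 2 * Real.cos (β t) * β' t + Real.sin (θ₂ t) = 0 := by
    have : ρ * (2 * Real.cos (α t) * α' t - 2 * Real.cos (β t) * β' t + Real.sin (θ₂ t)) = 0 := by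
      ring_nf; ring_nf at h1; linarith
    exact (mul_eq_zero.mp this).resolve_left hρ'
  have h2' : 2 * Real.sin (α t) * α' t + 2 * Real.sin (β t) * β' t - Real.cos (θ₂ t) = 0 := by
    have : ρ * (2 * Real.sin (α t) * α' t + 2 * Real.sin (β t) * β' t - Real.cos (θ₂ t)) = 0 := by
      ring_nf; ring_nf at h2; linarith
    exact (mul_eq_zero.mp this).resolve_left hρ'
  have hsab : Real.sin (α t + β t) = Real.sin (α t) * Real.cos (β t) +
      Real.cos (α t) * Real.sin (β t) := Real.sin_add _ _
  constructor
  · rw [Real.cos_sub, eq_div_iff (by simpa using mul_ne_zero two_ne_zero hs)]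
    linear_combination (Real.cos (α t)) * h2' - (Real.sin (α t)) * h1' + 2 * β' t * hsab
  · rw [Real.cos_add, eq_div_iff (by simpa using mul_ne_zero two_ne_zero hs)]
    linear_combination (Real.cos (β t)) * h2' + (Real.sin (β t)) * h1' + 2 * α' t * hsab
end

section
/- Under the LRL constraint equations (2ρ sin α + ρ = 2ρ sin β + ρ cos θ₂ + ȳ and 2ρ cos α + 2ρ cos β + ρ sin θ₂ = x̄, with ρ > 0), the length function 𝔇(θ₂) = (2π + 2α(θ₂) + 2β(θ₂) + θ₂)ρ has derivative d𝔇/dθ₂ = ρ·(cos(θ₂ − α)/sin(α + β) + cos(θ₂ + β)/sin(α + β) + 1) wherever sin(α + β) ≠ 0. -/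
open Real

/-- The derivative of the LRL Dubins path length 𝔇(θ₂) = (2π + 2α + 2β + θ₂)ρ with
respect to θ₂, under the LRL closure equations. -/
theorem lrl_length_derivative
    (ρ xbar ybar : ℝ) (hρ : 0 < ρ)
    (α β α' β' : ℝ → ℝ)
    (hα : ∀ θ, HasDerivAt α (α' θ) θ)
    (hβ : ∀ θ, HasDerivAt β (β' θ) θ)
    (hc1 : ∀ θ, 2 * ρ * Real.sin (α θ) + ρ =
      2 * ρ * Real.sin (β θ) + ρ * Real.cos θ + ybar)
    (hc2 : ∀ θ, 2 * ρ * Real.cos (α θ) + 2 * ρ * Real.cos (β θ) + ρ * Real.sin θ = xbar) :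
    ∀ θ, Real.sin (α θ + β θ) ≠ 0 →
      HasDerivAt (fun t => (2 * π + 2 * α t + 2 * β t + t) * ρ)
        (ρ * (Real.cos (θ - α θ) / Real.sin (α θ + β θ) +
              Real.cos (θ + β θ) / Real.sin (α θ + β θ) + 1)) θ := by
  intro θ hs
  have hρ' : ρ ≠ 0 := ne_of_gt hρ
  -- Derivative of the first constraint function (which is constantly 0)
  have hg1 : HasDerivAt (fun t => 2 * ρ * Real.sin (α t) + ρ -
      (2 * ρ * Real.sin (β t) + ρ * Real.cos t + ybar))
      (2 * ρ * (Real.cos (α θ) * α' θ) -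
        (2 * ρ * (Real.cos (β θ) * β' θ) + ρ * (-Real.sin θ))) θ := by
    have h1 := ((hα θ).sin.const_mul (2 * ρ)).add_const ρ
    have h2 := (((hβ θ).sin.const_mul (2 * ρ)).add
      ((Real.hasDerivAt_cos θ).const_mul ρ)).add_const ybar
    exact (h1.sub h2).congr_deriv (by ring)
  have hg1eq : (fun t => 2 * ρ * Real.sin (α t) + ρ -
      (2 * ρ * Real.sin (β t) + ρ * Real.cos t + ybar)) = fun _ => (0 : ℝ) := by
    funext t; rw [hc1 t]; ring
  have e1 : 2 * ρ * (Real.cos (α θ) * α' θ) -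
      (2 * ρ * (Real.cos (β θ) * β' θ) + ρ * (-Real.sin θ)) = 0 := by
    have := hg1eq ▸ hg1
    have h0 : HasDerivAt (fun _ : ℝ => (0 : ℝ)) 0 θ := hasDerivAt_const θ 0
    exact this.unique h0
  -- Derivative of the second constraint function (constant)
  have hg2 : HasDerivAt (fun t => 2 * ρ * Real.cos (α t) + 2 * ρ * Real.cos (β t) +
      ρ * Real.sin t)
      (2 * ρ * (-Real.sin (α θ) * α' θ) + 2 * ρ * (-Real.sin (β θ) * β' θ) +
        ρ * Real.cos θ) θ := by
    have h1 := (hα θ).cos.const_mul (2 * ρ)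
    have h2 := (hβ θ).cos.const_mul (2 * ρ)
    have h3 := (Real.hasDerivAt_sin θ).const_mul ρ
    exact ((h1.add h2).add h3).congr_deriv (by ring)
  have hg2eq : (fun t => 2 * ρ * Real.cos (α t) + 2 * ρ * Real.cos (β t) +
      ρ * Real.sin t) = fun _ => xbar := by
    funext t; exact hc2 t
  have e2 : 2 * ρ * (-Real.sin (α θ) * α' θ) + 2 * ρ * (-Real.sin (β θ) * β' θ) +
      ρ * Real.cos θ = 0 := by
    have := hg2eq ▸ hg2
    have h0 : HasDerivAt (fun _ : ℝ => xbar) 0 θ := hasDerivAt_const θ xbar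
    exact this.unique h0
  -- cancel ρ
  have e1' : Real.cos (α θ) * α' θ - Real.cos (β θ) * β' θ + Real.sin θ / 2 = 0 := by
    have : ρ * (2 * (Real.cos (α θ) * α' θ - Real.cos (β θ) * β' θ + Real.sin θ / 2)) = 0 := by
      linarith [e1]
    have := mul_eq_zero.mp this
    rcases this with h | h
    · exact absurd h hρ'
    · linarith
  have e2' : Real.sin (α θ) * α' θ + Real.sin (β θ) * β' θ - Real.cos θ / 2 = 0 := by
    have : ρ * (2 * (Real.sin (α θ) * α' θ + Real.sin (β θ) * β' θ - Real.cos θ / 2)) = 0 := by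
      linarith [e2]
    rcases mul_eq_zero.mp this with h | h
    · exact absurd h hρ'
    · linarith
  -- solve for α' and β'
  have hA : α' θ * Real.sin (α θ + β θ) = Real.cos (θ + β θ) / 2 := by
    rw [Real.sin_add, Real.cos_add]
    linear_combination Real.sin (β θ) * e1' + Real.cos (β θ) * e2'
  have hB : β' θ * Real.sin (α θ + β θ) = Real.cos (θ - α θ) / 2 := by
    rw [Real.sin_add, Real.cos_sub]
    linear_combination (-Real.sin (α θ)) * e1' + Real.cos (α θ) * e2'
  -- the derivative of the length function
  have hD : HasDerivAt (fun t => (2 * π + 2 * α t + 2 * β t + t) * ρ)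
      ((2 * α' θ + 2 * β' θ + 1) * ρ) θ := by
    have h1 := (((((hα θ).const_mul 2).add ((hβ θ).const_mul 2)).add
      (hasDerivAt_id θ)).const_add (2 * π)).mul_const ρ
    refine h1.congr_of_eventuallyEq (Filter.Eventually.of_forall fun t => ?_)
    simp only [Pi.add_apply, id_eq]; ring
  convert hD using 1
  field_simp
  linear_combination (-2) * hA + (-2) * hB
end

section
/- At a critical point of the LRL path length where θ₂ = π/2 + α, assuming 0 < α + β < π and ρ > 0, the second derivative satisfies d²𝔇/dθ₂² = −(3ρ/2)·(1 + cos(α + β))/sin(α + β) < 0, so the length 𝔇 attains a local maximum there. -/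
open Real

/-- At a critical point of the LRL path length where θ₂ = π/2 + α, the second
derivative equals −(3ρ/2)(1 + cos(α+β))/sin(α+β) < 0, so the length attains a
local maximum there. -/
theorem lrl_second_derivative
    (ρ : ℝ) (hρ : 0 < ρ)
    (α β : ℝ → ℝ)
    (hα : ∀ θ, HasDerivAt α (Real.cos (θ + β θ) / (2 * Real.sin (α θ + β θ))) θ)
    (hβ : ∀ θ, HasDerivAt β (Real.cos (θ - α θ) / (2 * Real.sin (α θ + β θ))) θ)
    (θ₀ : ℝ)
    (hab : 0 < α θ₀ + β θ₀) (hab' : α θ₀ + β θ₀ < π)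
    (hcrit : θ₀ = π / 2 + α θ₀) :
    HasDerivAt (fun θ => ρ * (Real.cos (θ - α θ) / Real.sin (α θ + β θ) +
        Real.cos (θ + β θ) / Real.sin (α θ + β θ) + 1))
      (-(3 * ρ / 2) * (1 + Real.cos (α θ₀ + β θ₀)) / Real.sin (α θ₀ + β θ₀)) θ₀ ∧
    -(3 * ρ / 2) * (1 + Real.cos (α θ₀ + β θ₀)) / Real.sin (α θ₀ + β θ₀) < 0 ∧
    IsLocalMax (fun θ => (2 * π + 2 * α θ + 2 * β θ + θ) * ρ) θ₀ := by
  have hs : 0 < Real.sin (α θ₀ + β θ₀) := Real.sin_pos_of_pos_of_lt_pi hab hab'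
  have hsne : Real.sin (α θ₀ + β θ₀) ≠ 0 := ne_of_gt hs
  have h1 : θ₀ - α θ₀ = π / 2 := by linarith [hcrit]
  have h2 : θ₀ + β θ₀ = π / 2 + (α θ₀ + β θ₀) := by linarith [hcrit]
  have hcpa : Real.cos (π / 2 + (α θ₀ + β θ₀)) = -Real.sin (α θ₀ + β θ₀) := by
    rw [Real.cos_add]; simp
  have hspa : Real.sin (π / 2 + (α θ₀ + β θ₀)) = Real.cos (α θ₀ + β θ₀) := by
    rw [Real.sin_add]; simp
  -- derivative values of α and β at θ₀
  have hA : HasDerivAt α (-(1/2) : ℝ) θ₀ := by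
    have e : Real.cos (θ₀ + β θ₀) / (2 * Real.sin (α θ₀ + β θ₀)) = -(1/2) := by
      rw [h2, hcpa]; field_simp
    exact e ▸ hα θ₀
  have hB : HasDerivAt β (0 : ℝ) θ₀ := by
    have e : Real.cos (θ₀ - α θ₀) / (2 * Real.sin (α θ₀ + β θ₀)) = 0 := by
      rw [h1]; simp
    exact e ▸ hβ θ₀
  set g : ℝ → ℝ := fun θ => ρ * (Real.cos (θ - α θ) / Real.sin (α θ + β θ) +
      Real.cos (θ + β θ) / Real.sin (α θ + β θ) + 1) with hgdef
  set L : ℝ := -(3 * ρ / 2) * (1 + Real.cos (α θ₀ + β θ₀)) / Real.sin (α θ₀ + β θ₀) with hL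
  -- second derivative computation
  have hc1 : HasDerivAt (fun θ => Real.cos (θ - α θ))
      (-Real.sin (θ₀ - α θ₀) * (1 - -(1/2))) θ₀ := ((hasDerivAt_id θ₀).sub hA).cos
  have hc2 : HasDerivAt (fun θ => Real.cos (θ + β θ))
      (-Real.sin (θ₀ + β θ₀) * (1 + 0)) θ₀ := ((hasDerivAt_id θ₀).add hB).cos
  have hv : HasDerivAt (fun θ => Real.sin (α θ + β θ))
      (Real.cos (α θ₀ + β θ₀) * (-(1/2) + 0)) θ₀ := (hA.add hB).sin
  have hq1 := hc1.div hv hsne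
  have hq2 := hc2.div hv hsne
  have hG : HasDerivAt g L θ₀ := by
    have h := ((hq1.add hq2).add (hasDerivAt_const θ₀ (1:ℝ))).const_mul ρ
    refine h.congr_deriv ?_
    rw [hL, h1, h2, hcpa, hspa]
    simp only [Real.cos_pi_div_two, Real.sin_pi_div_two]
    field_simp
    ring
  have hcos : (0:ℝ) < 1 + Real.cos (α θ₀ + β θ₀) := by
    have h2' : Real.cos ((α θ₀ + β θ₀) / 2) > 0 :=
      Real.cos_pos_of_mem_Ioo ⟨by linarith [Real.pi_pos], by linarith⟩
    have hsq := Real.cos_sq ((α θ₀ + β θ₀) / 2)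
    rw [show 2 * ((α θ₀ + β θ₀) / 2) = α θ₀ + β θ₀ by ring] at hsq
    nlinarith
  have hLneg : L < 0 := by
    rw [hL]
    exact div_neg_of_neg_of_pos (by nlinarith) hs
  refine ⟨hG, hLneg, ?_⟩
  -- local maximum via first derivative test
  have hg0 : g θ₀ = 0 := by
    rw [hgdef]; simp only
    rw [h1, h2, hcpa, Real.cos_pi_div_two]
    field_simp
    ring
  set D : ℝ → ℝ := fun θ => (2 * π + 2 * α θ + 2 * β θ + θ) * ρ with hDdef
  have hDd : ∀ θ, Real.sin (α θ + β θ) ≠ 0 → HasDerivAt D (g θ) θ := by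
    intro θ hθ
    have h := ((((hasDerivAt_const θ (2*π)).add ((hα θ).const_mul 2)).add
      ((hβ θ).const_mul 2)).add (hasDerivAt_id θ)).mul_const ρ
    refine h.congr_deriv ?_
    rw [hgdef]; simp only [id_eq]
    field_simp
    ring
  have hcont : Continuous (fun θ => Real.sin (α θ + β θ)) := by
    have hda : Differentiable ℝ α := fun θ => (hα θ).differentiableAt
    have hdb : Differentiable ℝ β := fun θ => (hβ θ).differentiableAt
    have hca : Continuous α := hda.continuous
    have hcb : Continuous β := hdb.continuous
    exact Real.continuous_sin.comp (hca.add hcb)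
  have hnb : ∀ᶠ θ in nhds θ₀, 0 < Real.sin (α θ + β θ) :=
    (continuousAt_const).eventually_lt hcont.continuousAt hs
  have hslope : ∀ᶠ θ in nhdsWithin θ₀ {θ₀}ᶜ, slope g θ₀ θ < 0 :=
    (hasDerivAt_iff_tendsto_slope.mp hG).eventually_lt_const hLneg
  have key : ∀ᶠ θ in nhdsWithin θ₀ {θ₀}ᶜ,
      (θ < θ₀ → 0 < g θ) ∧ (θ₀ < θ → g θ < 0) ∧ HasDerivAt D (g θ) θ := by
    filter_upwards [hslope, nhdsWithin_le_nhds hnb] with θ hsl hsin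
    rw [slope_def_field, hg0, sub_zero] at hsl
    refine ⟨?_, ?_, hDd θ (ne_of_gt hsin)⟩
    · intro hlt
      rcases div_neg_iff.mp hsl with ⟨ha, hb⟩ | ⟨ha, hb⟩
      · exact ha
      · linarith
    · intro hlt
      rcases div_neg_iff.mp hsl with ⟨ha, hb⟩ | ⟨ha, hb⟩
      · linarith
      · exact ha
  apply isLocalMax_of_deriv (hDd θ₀ hsne).differentiableAt.continuousAt
  · filter_upwards [key] with θ h
    exact h.2.2.differentiableAt
  · filter_upwards [nhdsLT_le_nhdsNE θ₀ key, self_mem_nhdsWithin] with θ h hmem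
    rw [h.2.2.deriv]
    exact le_of_lt (h.1 hmem)
  · filter_upwards [nhdsGT_le_nhdsNE θ₀ key, self_mem_nhdsWithin] with θ h hmem
    rw [h.2.2.deriv]
    exact le_of_lt (h.2.1 hmem)
end

section
/- Let ρ > 0, x̄ > 0, and let L(θ₁) > 0, φ(θ₁) be differentiable functions satisfying ρ sin φ + L cos φ = x̄ − ρ sin θ₁ and ρ cos φ − L sin φ = ρ cos θ₁. Then dφ/dθ₁ = (x̄/L)·cos φ − 1 and dL/dθ₁ = −(ρ x̄ / L)·cos θ₁. -/
open Real

/-- RS Dubins path geometry: implicit differentiation of the closure equations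
gives the derivatives of φ and L with respect to θ₁. -/
theorem rs_implicit_derivatives
    (ρ xbar : ℝ) (hρ : 0 < ρ) (hx : 0 < xbar)
    (L φ L' φ' : ℝ → ℝ)
    (hLpos : ∀ θ, 0 < L θ)
    (hL : ∀ θ, HasDerivAt L (L' θ) θ)
    (hφ : ∀ θ, HasDerivAt φ (φ' θ) θ)
    (hc1 : ∀ θ, ρ * Real.sin (φ θ) + L θ * Real.cos (φ θ) = xbar - ρ * Real.sin θ)
    (hc2 : ∀ θ, ρ * Real.cos (φ θ) - L θ * Real.sin (φ θ) = ρ * Real.cos θ) :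
    ∀ θ, φ' θ = (xbar / L θ) * Real.cos (φ θ) - 1 ∧
      L' θ = -(ρ * xbar / L θ) * Real.cos θ := by
  intro θ
  have hL0 : L θ ≠ 0 := (hLpos θ).ne'
  set s := Real.sin (φ θ) with hs
  set c := Real.cos (φ θ) with hc
  have hd1 : HasDerivAt (fun t => ρ * Real.sin (φ t) + L t * Real.cos (φ t) + ρ * Real.sin t)
      (ρ * (Real.cos (φ θ) * φ' θ) + (L' θ * Real.cos (φ θ) + L θ * (-Real.sin (φ θ) * φ' θ))
        + ρ * Real.cos θ) θ := by
    exact (((hφ θ).sin.const_mul ρ).add ((hL θ).mul (hφ θ).cos)).add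
      ((Real.hasDerivAt_sin θ).const_mul ρ)
  have hd2 : HasDerivAt (fun t => ρ * Real.cos (φ t) - L t * Real.sin (φ t) - ρ * Real.cos t)
      (ρ * (-Real.sin (φ θ) * φ' θ) - (L' θ * Real.sin (φ θ) + L θ * (Real.cos (φ θ) * φ' θ))
        - ρ * (-Real.sin θ)) θ := by
    exact (((hφ θ).cos.const_mul ρ).sub ((hL θ).mul (hφ θ).sin)).sub
      ((Real.hasDerivAt_cos θ).const_mul ρ)
  have hf1 : (fun t => ρ * Real.sin (φ t) + L t * Real.cos (φ t) + ρ * Real.sin t)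
      = fun _ => xbar := funext fun t => by have := hc1 t; linarith
  have hf2 : (fun t => ρ * Real.cos (φ t) - L t * Real.sin (φ t) - ρ * Real.cos t)
      = fun _ => (0 : ℝ) := funext fun t => by have := hc2 t; linarith
  rw [hf1] at hd1
  rw [hf2] at hd2
  have e1 : ρ * (c * φ' θ) + (L' θ * c + L θ * (-s * φ' θ)) + ρ * Real.cos θ = 0 :=
    hd1.unique (hasDerivAt_const θ xbar)
  have e2 : ρ * (-s * φ' θ) - (L' θ * s + L θ * (c * φ' θ)) - ρ * (-Real.sin θ) = 0 :=
    hd2.unique (hasDerivAt_const θ 0)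
  have p : s ^ 2 + c ^ 2 = 1 := Real.sin_sq_add_cos_sq (φ θ)
  have g1 : ρ * s + L θ * c = xbar - ρ * Real.sin θ := hc1 θ
  have g2 : ρ * c - L θ * s = ρ * Real.cos θ := hc2 θ
  have k1 : L θ * φ' θ = xbar * c - L θ := by
    linear_combination (-s) * e1 + (-c) * e2 + c * g1 + (-s) * g2
      + (-(L θ * φ' θ + L θ)) * p
  have k2 : L θ * L' θ = -(ρ * xbar) * Real.cos θ := by
    linear_combination (L θ * c) * e1 + (-(L θ * s)) * e2 + (-ρ) * k1
      + (L θ * c - xbar) * g2 + (L θ * s) * g1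
      + (-(L θ * (ρ * φ' θ + L' θ)) - ρ * L θ) * p
  constructor
  · field_simp
    linarith [k1]
  · field_simp
    linarith [k2]
end

section
/- Let ρ > 0 and let φ(θ₁), θ₂(θ₁) be differentiable functions satisfying 2ρ cos φ − ρ cos θ₂ = ρ cos θ₁ and 2ρ sin φ + ρ sin θ₂ = x̄ − ρ sin θ₁. Then whenever sin(φ + θ₂) ≠ 0, dφ/dθ₁ = sin(θ₁ − θ₂)/(2 sin(φ + θ₂)) and dθ₂/dθ₁ = −sin(θ₁ + φ)/sin(φ + θ₂). -/
open Real

/-- RL Dubins path geometry: implicit differentiation of the closure equations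
gives the derivatives of φ and θ₂ with respect to θ₁. -/
theorem rl_implicit_derivatives
    (ρ xbar : ℝ) (hρ : 0 < ρ)
    (φ θ₂ φ' θ₂' : ℝ → ℝ)
    (hφ : ∀ θ, HasDerivAt φ (φ' θ) θ)
    (hθ₂ : ∀ θ, HasDerivAt θ₂ (θ₂' θ) θ)
    (hc1 : ∀ θ, 2 * ρ * Real.cos (φ θ) - ρ * Real.cos (θ₂ θ) = ρ * Real.cos θ)
    (hc2 : ∀ θ, 2 * ρ * Real.sin (φ θ) + ρ * Real.sin (θ₂ θ) = xbar - ρ * Real.sin θ) :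
    ∀ θ, Real.sin (φ θ + θ₂ θ) ≠ 0 →
      φ' θ = Real.sin (θ - θ₂ θ) / (2 * Real.sin (φ θ + θ₂ θ)) ∧
      θ₂' θ = -Real.sin (θ + φ θ) / Real.sin (φ θ + θ₂ θ) := by
  intro θ hs
  have hρ' : ρ ≠ 0 := hρ.ne'
  -- derivative of first constraint
  have d1 : HasDerivAt (fun t => 2 * ρ * Real.cos (φ t) - ρ * Real.cos (θ₂ t))
      (2 * ρ * (-Real.sin (φ θ) * φ' θ) - ρ * (-Real.sin (θ₂ θ) * θ₂' θ)) θ :=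
    ((hφ θ).cos.const_mul (2 * ρ)).sub ((hθ₂ θ).cos.const_mul ρ)
  have d1' : HasDerivAt (fun t => ρ * Real.cos t)
      (2 * ρ * (-Real.sin (φ θ) * φ' θ) - ρ * (-Real.sin (θ₂ θ) * θ₂' θ)) θ := by
    have hfun : (fun t => 2 * ρ * Real.cos (φ t) - ρ * Real.cos (θ₂ t))
        = fun t => ρ * Real.cos t := funext hc1
    rwa [hfun] at d1
  have dcos : HasDerivAt (fun t => ρ * Real.cos t) (-Real.sin θ * ρ) θ := by
    simpa [mul_comm] using (Real.hasDerivAt_cos θ).const_mul ρ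
  have eq1 := d1'.unique dcos
  -- derivative of second constraint
  have d2 : HasDerivAt (fun t => 2 * ρ * Real.sin (φ t) + ρ * Real.sin (θ₂ t))
      (2 * ρ * (Real.cos (φ θ) * φ' θ) + ρ * (Real.cos (θ₂ θ) * θ₂' θ)) θ :=
    ((hφ θ).sin.const_mul (2 * ρ)).add ((hθ₂ θ).sin.const_mul ρ)
  have d2' : HasDerivAt (fun t => xbar - ρ * Real.sin t)
      (2 * ρ * (Real.cos (φ θ) * φ' θ) + ρ * (Real.cos (θ₂ θ) * θ₂' θ)) θ := by
    have hfun : (fun t => 2 * ρ * Real.sin (φ t) + ρ * Real.sin (θ₂ t))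
        = fun t => xbar - ρ * Real.sin t := funext hc2
    rwa [hfun] at d2
  have dsin : HasDerivAt (fun t => xbar - ρ * Real.sin t) (-(ρ * Real.cos θ)) θ := by
    simpa using ((Real.hasDerivAt_sin θ).const_mul ρ).const_sub xbar
  have eq2 := d2'.unique dsin
  have E1 : 2 * (-Real.sin (φ θ) * φ' θ) - (-Real.sin (θ₂ θ) * θ₂' θ) = -Real.sin θ := by
    apply mul_left_cancel₀ hρ'
    linear_combination eq1
  have E2 : 2 * (Real.cos (φ θ) * φ' θ) + Real.cos (θ₂ θ) * θ₂' θ = -Real.cos θ := by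
    apply mul_left_cancel₀ hρ'
    linear_combination eq2
  constructor
  · rw [eq_div_iff (by simpa using mul_ne_zero two_ne_zero hs)]
    rw [Real.sin_add, Real.sin_sub] at *
    linear_combination (-(Real.cos (θ₂ θ))) * E1 + (Real.sin (θ₂ θ)) * E2
  · rw [eq_div_iff hs]
    rw [Real.sin_add, Real.sin_add] at *
    linear_combination (Real.cos (φ θ)) * E1 + (Real.sin (φ θ)) * E2
end

section
/- Suppose sin(φ + θ₂) ≠ 0 and sin(φ + θ₂) − sin(θ₁ + φ) + sin(θ₁ − θ₂) = 0. Then (θ₁ + φ) ≡ 0, or (θ₂ + φ) ≡ 0, or θ₁ ≡ θ₂ (all modulo 2π). -/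
open Real


lemma rl_aux (b c : ℝ) :
    Real.sin (2 * b) - Real.sin (2 * (b + c)) + Real.sin (2 * c)
      = 4 * Real.sin (b + c) * Real.sin b * Real.sin c := by
  rw [Real.sin_two_mul, Real.sin_two_mul, Real.sin_two_mul, Real.sin_add, Real.cos_add]
  linear_combination (-2 * Real.sin b * Real.cos b) * Real.sin_sq_add_cos_sq c +
    (-2 * Real.sin c * Real.cos c) * Real.sin_sq_add_cos_sq b

/-- The critical point equation of the RL path length factors: its vanishing
forces θ₁ + φ ≡ 0, or θ₂ + φ ≡ 0, or θ₁ ≡ θ₂ (all modulo 2π). -/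
theorem rl_critical_point_factorization
    (θ₁ θ₂ φ : ℝ)
    (hne : Real.sin (φ + θ₂) ≠ 0)
    (heq : Real.sin (φ + θ₂) - Real.sin (θ₁ + φ) + Real.sin (θ₁ - θ₂) = 0) :
    (∃ k : ℤ, θ₁ + φ = 2 * π * k) ∨
    (∃ k : ℤ, θ₂ + φ = 2 * π * k) ∨
    (∃ k : ℤ, θ₁ - θ₂ = 2 * π * k) := by
  have e1 : φ + θ₂ = 2 * ((θ₂ + φ) / 2) := by ring
  have e2 : θ₁ + φ = 2 * ((θ₁ + φ) / 2) := by ring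
  have e3 : θ₁ - θ₂ = 2 * ((θ₁ - θ₂) / 2) := by ring
  have e4 : (θ₁ + φ) / 2 = (θ₂ + φ) / 2 + (θ₁ - θ₂) / 2 := by ring
  have hfac : Real.sin (φ + θ₂) - Real.sin (θ₁ + φ) + Real.sin (θ₁ - θ₂)
      = 4 * Real.sin ((θ₁ + φ) / 2) * Real.sin ((θ₂ + φ) / 2)
          * Real.sin ((θ₁ - θ₂) / 2) := by
    have h := rl_aux ((θ₂ + φ) / 2) ((θ₁ - θ₂) / 2)
    have a1 : 2 * ((θ₂ + φ) / 2) = φ + θ₂ := by ring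
    have a2 : 2 * ((θ₂ + φ) / 2 + (θ₁ - θ₂) / 2) = θ₁ + φ := by ring
    have a3 : 2 * ((θ₁ - θ₂) / 2) = θ₁ - θ₂ := by ring
    have a4 : (θ₂ + φ) / 2 + (θ₁ - θ₂) / 2 = (θ₁ + φ) / 2 := by ring
    rw [a1, a2, a3, a4] at h
    exact h
  rw [hfac] at heq
  have h4 : (4 : ℝ) ≠ 0 := by norm_num
  rcases mul_eq_zero.mp heq with h | h
  · rcases mul_eq_zero.mp h with h | h
    · rcases mul_eq_zero.mp h with h | h
      · exact absurd h h4
      · left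
        obtain ⟨n, hn⟩ := Real.sin_eq_zero_iff.mp h
        exact ⟨n, by linarith⟩
    · right; left
      obtain ⟨n, hn⟩ := Real.sin_eq_zero_iff.mp h
      exact ⟨n, by linarith⟩
  · right; right
    obtain ⟨n, hn⟩ := Real.sin_eq_zero_iff.mp h
    exact ⟨n, by linarith⟩
end

section
/- At a critical point of the RL path length where θ₁ = θ₂ (so that dθ₂/dθ₁ = −1 and dφ/dθ₁ = 0), the second derivative satisfies d²𝔇/dθ₁² = 2ρ(1 − cos(θ₁ + φ))/sin(θ₁ + φ), which is positive when 0 < θ₁ + φ < π; hence 𝔇 attains a local minimum there. -/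
open Real

/-- At a critical point of the RL path length where θ₁ = θ₂ (so dθ₂/dθ₁ = −1 and
dφ/dθ₁ = 0), the second derivative equals 2ρ(1 − cos(θ₁+φ))/sin(θ₁+φ), which is
positive when 0 < θ₁ + φ < π; hence 𝔇 attains a local minimum there. -/
theorem rl_second_derivative
    (ρ xbar : ℝ) (hρ : 0 < ρ)
    (φ θ₂ : ℝ → ℝ)
    (hc1 : ∀ θ, 2 * ρ * Real.cos (φ θ) - ρ * Real.cos (θ₂ θ) = ρ * Real.cos θ)
    (hc2 : ∀ θ, 2 * ρ * Real.sin (φ θ) + ρ * Real.sin (θ₂ θ) = xbar - ρ * Real.sin θ)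
    (hφ : ∀ θ, HasDerivAt φ (Real.sin (θ - θ₂ θ) / (2 * Real.sin (φ θ + θ₂ θ))) θ)
    (hθ₂ : ∀ θ, HasDerivAt θ₂ (-Real.sin (θ + φ θ) / Real.sin (φ θ + θ₂ θ)) θ)
    (θ₀ : ℝ) (hfix : θ₂ θ₀ = θ₀)
    (hrange : 0 < θ₀ + φ θ₀) (hrange' : θ₀ + φ θ₀ < π) :
    HasDerivAt (fun θ => ρ * (1 - Real.sin (θ + φ θ) / Real.sin (φ θ + θ₂ θ) +
        Real.sin (θ - θ₂ θ) / Real.sin (φ θ + θ₂ θ)))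
      (2 * ρ * (1 - Real.cos (θ₀ + φ θ₀)) / Real.sin (θ₀ + φ θ₀)) θ₀ ∧
    0 < 2 * ρ * (1 - Real.cos (θ₀ + φ θ₀)) / Real.sin (θ₀ + φ θ₀) ∧
    IsLocalMin (fun θ => ρ * (θ + θ₂ θ + 2 * φ θ)) θ₀ := by
  set f : ℝ → ℝ := fun θ => ρ * (1 - Real.sin (θ + φ θ) / Real.sin (φ θ + θ₂ θ) +
        Real.sin (θ - θ₂ θ) / Real.sin (φ θ + θ₂ θ)) with hf_def
  have hs : 0 < Real.sin (θ₀ + φ θ₀) := Real.sin_pos_of_pos_of_lt_pi hrange hrange'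
  have hv : Real.sin (φ θ₀ + θ₂ θ₀) = Real.sin (θ₀ + φ θ₀) := by rw [hfix, add_comm]
  have hvc : Real.cos (φ θ₀ + θ₂ θ₀) = Real.cos (θ₀ + φ θ₀) := by rw [hfix, add_comm]
  have hden : Real.sin (φ θ₀ + θ₂ θ₀) ≠ 0 := by rw [hv]; exact hs.ne'
  have hφ0 : HasDerivAt φ 0 θ₀ := by
    have := hφ θ₀
    rwa [hfix, sub_self, Real.sin_zero, zero_div] at this
  have hθ₂0 : HasDerivAt θ₂ (-1) θ₀ := by
    have := hθ₂ θ₀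
    rwa [hv, neg_div, div_self hs.ne'] at this
  have hu : HasDerivAt (fun θ => θ + φ θ) 1 θ₀ := by
    simpa using (hasDerivAt_id' θ₀).fun_add hφ0
  have hv' : HasDerivAt (fun θ => φ θ + θ₂ θ) (-1) θ₀ := by
    simpa using hφ0.fun_add hθ₂0
  have hw : HasDerivAt (fun θ => θ - θ₂ θ) 2 θ₀ := by
    have := (hasDerivAt_id θ₀).sub hθ₂0
    norm_num at this
    exact this
  have hU : HasDerivAt (fun θ => Real.sin (θ + φ θ)) (Real.cos (θ₀ + φ θ₀)) θ₀ := by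
    simpa using hu.sin
  have hV : HasDerivAt (fun θ => Real.sin (φ θ + θ₂ θ)) (-Real.cos (θ₀ + φ θ₀)) θ₀ := by
    have := hv'.sin
    simpa [hvc] using this
  have hW : HasDerivAt (fun θ => Real.sin (θ - θ₂ θ)) 2 θ₀ := by
    have := hw.sin
    simpa [hfix] using this
  have hG := hU.fun_div hV hden
  have hH := hW.fun_div hV hden
  have hf' : HasDerivAt f
      (2 * ρ * (1 - Real.cos (θ₀ + φ θ₀)) / Real.sin (θ₀ + φ θ₀)) θ₀ := by
    have h1 := (((hasDerivAt_const θ₀ (1:ℝ)).fun_sub hG).fun_add hH).const_mul ρ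
    refine h1.congr_deriv ?_
    rw [hv, hfix, sub_self, Real.sin_zero]
    field_simp
    ring
  have hf0 : f θ₀ = 0 := by
    simp only [hf_def]
    rw [hv, hfix, sub_self, Real.sin_zero, zero_div, div_self hs.ne']
    ring
  have hK : 0 < 2 * ρ * (1 - Real.cos (θ₀ + φ θ₀)) / Real.sin (θ₀ + φ θ₀) := by
    apply div_pos _ hs
    have hc : Real.cos (θ₀ + φ θ₀) < 1 := by
      rcases lt_or_eq_of_le (Real.cos_le_one (θ₀ + φ θ₀)) with h | h
      · exact h
      · exfalso
        have := (Real.cos_eq_one_iff_of_lt_of_lt (x := θ₀ + φ θ₀)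
          (by linarith [Real.pi_pos]) (by linarith [Real.pi_pos])).mp h
        linarith
    nlinarith
  have hD : ∀ θ, HasDerivAt (fun θ => ρ * (θ + θ₂ θ + 2 * φ θ)) (f θ) θ := by
    intro θ
    have h := (((hasDerivAt_id' θ).fun_add (hθ₂ θ)).fun_add ((hφ θ).const_mul 2)).const_mul ρ
    refine h.congr_deriv ?_
    simp only [hf_def]
    rw [← mul_div_assoc, mul_div_mul_left _ _ (two_ne_zero (α := ℝ)), neg_div]
    ring
  refine ⟨hf', hK, ?_⟩
  have hslope : Filter.Tendsto (slope f θ₀) (nhdsWithin θ₀ {θ₀}ᶜ)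
      (nhds (2 * ρ * (1 - Real.cos (θ₀ + φ θ₀)) / Real.sin (θ₀ + φ θ₀))) :=
    hasDerivAt_iff_tendsto_slope.mp hf'
  have hpos : ∀ᶠ x in nhdsWithin θ₀ {θ₀}ᶜ, 0 < slope f θ₀ x :=
    hslope.eventually (eventually_gt_nhds hK)
  have hleft : ∀ᶠ x in nhdsWithin θ₀ (Set.Iio θ₀),
      deriv (fun θ => ρ * (θ + θ₂ θ + 2 * φ θ)) x ≤ 0 := by
    filter_upwards [nhdsWithin_mono θ₀
      (fun x (hx : x < θ₀) => ne_of_lt hx : Set.Iio θ₀ ⊆ {θ₀}ᶜ) hpos,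
      self_mem_nhdsWithin] with x hx hx'
    rw [(hD x).deriv]
    rw [slope_def_field, hf0, sub_zero] at hx
    rcases div_pos_iff.mp hx with ⟨_, h⟩ | ⟨h, _⟩
    · exfalso; have : (x : ℝ) < θ₀ := hx'; linarith
    · linarith
  have hright : ∀ᶠ x in nhdsWithin θ₀ (Set.Ioi θ₀),
      0 ≤ deriv (fun θ => ρ * (θ + θ₂ θ + 2 * φ θ)) x := by
    filter_upwards [nhdsWithin_mono θ₀
      (fun x (hx : θ₀ < x) => ne_of_gt hx : Set.Ioi θ₀ ⊆ {θ₀}ᶜ) hpos,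
      self_mem_nhdsWithin] with x hx hx'
    rw [(hD x).deriv]
    rw [slope_def_field, hf0, sub_zero] at hx
    rcases div_pos_iff.mp hx with ⟨h, _⟩ | ⟨_, h⟩
    · linarith
    · exfalso; have : θ₀ < x := hx'; linarith
  exact isLocalMin_of_deriv (hD θ₀).continuousAt
    (Filter.Eventually.of_forall fun x => (hD x).differentiableAt) hleft hright
end

section
/- Let g : [a,b] → ℝ be continuous, differentiable on (a,b) except at finitely many points, with the property that at every interior critical point g attains a local maximum. Then min over [a,b] of g equals the minimum of g over the set consisting of a, b, and the finitely many non-differentiability points. -/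
open Set

/-- If every interior critical point of g is a local maximum, then the minimum of
g over [a,b] is attained at an endpoint or at a point of non-differentiability. -/
theorem min_at_endpoints_or_nonsmooth
    (a b : ℝ) (hab : a ≤ b)
    (g : ℝ → ℝ) (E : Set ℝ) (hE : E.Finite) (hEsub : E ⊆ Ioo a b)
    (hg : ContinuousOn g (Icc a b))
    (hdiff : ∀ x ∈ Ioo a b, x ∉ E → DifferentiableAt ℝ g x)
    (hcrit : ∀ x ∈ Ioo a b, x ∉ E → deriv g x = 0 → IsLocalMax g x) :
    sInf (g '' Icc a b) = sInf (g '' (E ∪ {a, b})) := by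
  have hne : (Icc a b).Nonempty := nonempty_Icc.2 hab
  obtain ⟨x₁, hx₁, hmin⟩ := isCompact_Icc.exists_isMinOn hne hg
  set m : ℝ := g x₁ with hm
  -- the minimum value of the image is m
  have himg : sInf (g '' Icc a b) = m := by
    apply le_antisymm
    · exact csInf_le (isCompact_Icc.bddBelow_image hg) ⟨x₁, hx₁, rfl⟩
    · apply le_csInf ((hne.image g))
      rintro y ⟨x, hx, rfl⟩
      exact hmin hx
  -- the set of minimizers
  set S : Set ℝ := {x | x ∈ Icc a b ∧ g x = m} with hS
  have hSsub : S ⊆ Icc a b := fun x hx => hx.1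
  have hSclosed : IsClosed S := by
    have : S = Icc a b ∩ g ⁻¹' {m} := by
      ext x; simp [hS, Set.mem_inter_iff]
    rw [this]
    exact ContinuousOn.preimage_isClosed_of_isClosed hg isClosed_Icc isClosed_singleton
  have hSne : S.Nonempty := ⟨x₁, hx₁, rfl⟩
  have hSbdd : BddBelow S := (isCompact_Icc.bddBelow).mono hSsub
  set x₀ : ℝ := sInf S with hx₀def
  have hx₀S : x₀ ∈ S := hSclosed.csInf_mem hSne hSbdd
  have hx₀Icc : x₀ ∈ Icc a b := hx₀S.1
  have hgx₀ : g x₀ = m := hx₀S.2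
  -- x₀ must lie in E ∪ {a, b}
  have hx₀mem : x₀ ∈ E ∪ {a, b} := by
    by_contra hcon
    have hxE : x₀ ∉ E := fun h => hcon (Or.inl h)
    have hxa : x₀ ≠ a := fun h => hcon (Or.inr (Or.inl h))
    have hxb : x₀ ≠ b := fun h => hcon (Or.inr (Or.inr h))
    have hx₀Ioo : x₀ ∈ Ioo a b :=
      ⟨lt_of_le_of_ne hx₀Icc.1 (Ne.symm hxa), lt_of_le_of_ne hx₀Icc.2 hxb⟩
    -- x₀ is an interior local min
    have hIoo_nhds : Ioo a b ∈ nhds x₀ := isOpen_Ioo.mem_nhds hx₀Ioo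
    have hlocmin : IsLocalMin g x₀ := by
      filter_upwards [hIoo_nhds] with y hy
      rw [hgx₀]
      exact hmin (Ioo_subset_Icc_self hy)
    have hderiv : deriv g x₀ = 0 := hlocmin.deriv_eq_zero
    have hlocmax : IsLocalMax g x₀ := hcrit x₀ hx₀Ioo hxE hderiv
    -- then g = m near x₀, contradicting x₀ = sInf S
    have hnear : ∀ᶠ y in nhds x₀, y ∈ S := by
      filter_upwards [hIoo_nhds, hlocmax] with y hy1 hy2
      refine ⟨Ioo_subset_Icc_self hy1, le_antisymm (hgx₀ ▸ hy2) (hmin (Ioo_subset_Icc_self hy1))⟩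
    obtain ⟨ε, hε, hball⟩ := Metric.eventually_nhds_iff_ball.1 hnear
    have hy : x₀ - ε / 2 ∈ S := by
      apply hball
      simp [Real.ball_eq_Ioo]
      constructor <;> linarith
    have := csInf_le hSbdd hy
    rw [← hx₀def] at this
    linarith
  -- conclude
  have hsubset : E ∪ {a, b} ⊆ Icc a b := by
    rintro x (hx | hx)
    · exact Ioo_subset_Icc_self (hEsub hx)
    · rcases hx with rfl | rfl
      · exact left_mem_Icc.2 hab
      · exact right_mem_Icc.2 hab
  have hfin : (g '' (E ∪ {a, b})).Finite := (hE.union (by simp)).image g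
  apply le_antisymm
  · exact csInf_le_csInf (isCompact_Icc.bddBelow_image hg)
      ⟨g a, a, Or.inr (Or.inl rfl), rfl⟩ (image_mono hsubset)
  · rw [himg, ← hgx₀]
    exact csInf_le hfin.bddBelow ⟨x₀, hx₀mem, rfl⟩
end

section
/- In the RS-path setup with 0 < x̄ ≤ 2ρ, the RS path from (0,0,θ₁) to (x̄, 0) does not exist for θ₁ in the open interval (arcsin(x̄/(2ρ)), π/2 + arccos(x̄/(2ρ))), and at the endpoints θ₁ = arcsin(x̄/(2ρ)) and θ₁ = π/2 + arccos(x̄/(2ρ)) the path degenerates to a single right circular arc of radius ρ joining the two points. -/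
open Real Complex

lemma rs_dist_eq (ρ xbar θ : ℝ) :
    dist (xbar : ℂ) (ρ * Real.sin θ - ρ * Real.cos θ * Complex.I)
      = Real.sqrt ((xbar - ρ * Real.sin θ)^2 + (ρ * Real.cos θ)^2) := by
  rw [Complex.dist_eq, Complex.norm_def, Complex.normSq_apply]
  have h1 : ((xbar : ℂ) - (ρ * Real.sin θ - ρ * Real.cos θ * Complex.I)).re
      = xbar - ρ * Real.sin θ := by
    simp only [Complex.sub_re, Complex.mul_re, Complex.mul_im, Complex.I_re,
      Complex.I_im, Complex.ofReal_re, Complex.ofReal_im]; ring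
  have h2 : ((xbar : ℂ) - (ρ * Real.sin θ - ρ * Real.cos θ * Complex.I)).im
      = ρ * Real.cos θ := by
    simp only [Complex.sub_im, Complex.mul_re, Complex.mul_im, Complex.I_re,
      Complex.I_im, Complex.ofReal_re, Complex.ofReal_im]; ring
  rw [h1, h2]; ring_nf

lemma rs_dist_eq' (ρ xbar θ : ℝ) :
    dist (xbar : ℂ) (ρ * Real.sin θ - ρ * Real.cos θ * Complex.I)
      = Real.sqrt (xbar^2 - 2 * xbar * ρ * Real.sin θ + ρ^2) := by
  rw [rs_dist_eq]
  congr 1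
  have := Real.sin_sq_add_cos_sq θ
  nlinarith [this]

/-- With 0 < x̄ ≤ 2ρ, the target (x̄, 0) lies strictly inside the right turning
circle (centered at (ρ sin θ₁, −ρ cos θ₁) of radius ρ) exactly for θ₁ in the
stated open interval — so no RS path exists there — and lies on the circle at
the endpoints, where the RS path degenerates to a single right arc. -/
theorem rs_nonexistence_interval
    (ρ xbar : ℝ) (hρ : 0 < ρ) (hx : 0 < xbar) (hx2 : xbar ≤ 2 * ρ) :
    (∀ θ₁ ∈ Set.Ioo (Real.arcsin (xbar / (2 * ρ)))
        (π / 2 + Real.arccos (xbar / (2 * ρ))),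
      dist (xbar : ℂ) (ρ * Real.sin θ₁ - ρ * Real.cos θ₁ * Complex.I) < ρ) ∧
    dist (xbar : ℂ)
      (ρ * Real.sin (Real.arcsin (xbar / (2 * ρ))) -
        ρ * Real.cos (Real.arcsin (xbar / (2 * ρ))) * Complex.I) = ρ ∧
    dist (xbar : ℂ)
      (ρ * Real.sin (π / 2 + Real.arccos (xbar / (2 * ρ))) -
        ρ * Real.cos (π / 2 + Real.arccos (xbar / (2 * ρ))) * Complex.I) = ρ := by
  set c := xbar / (2 * ρ) with hc
  have hc0 : 0 < c := by positivity
  have hc1 : c ≤ 1 := by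
    rw [hc, div_le_one (by positivity)]; linarith
  have hxc : xbar = 2 * ρ * c := by rw [hc]; field_simp
  have key : ∀ θ : ℝ, c < Real.sin θ →
      dist (xbar : ℂ) (ρ * Real.sin θ - ρ * Real.cos θ * Complex.I) < ρ := by
    intro θ h
    rw [rs_dist_eq']
    have : xbar^2 - 2 * xbar * ρ * Real.sin θ + ρ^2 < ρ^2 := by
      nlinarith [mul_lt_mul_of_pos_left h (by positivity : (0:ℝ) < 2 * xbar * ρ)]
    calc Real.sqrt (xbar^2 - 2 * xbar * ρ * Real.sin θ + ρ^2)
        < Real.sqrt (ρ^2) := by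
          apply Real.sqrt_lt_sqrt _ this
          have : (xbar - ρ * Real.sin θ)^2 + (ρ * Real.cos θ)^2
              = xbar^2 - 2 * xbar * ρ * Real.sin θ + ρ^2 := by
            nlinarith [Real.sin_sq_add_cos_sq θ]
          nlinarith [sq_nonneg (xbar - ρ * Real.sin θ), sq_nonneg (ρ * Real.cos θ)]
      _ = ρ := Real.sqrt_sq hρ.le
  have keyeq : ∀ θ : ℝ, Real.sin θ = c →
      dist (xbar : ℂ) (ρ * Real.sin θ - ρ * Real.cos θ * Complex.I) = ρ := by
    intro θ h
    rw [rs_dist_eq', h]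
    have : xbar^2 - 2 * xbar * ρ * c + ρ^2 = ρ^2 := by nlinarith
    rw [this, Real.sqrt_sq hρ.le]
  refine ⟨?_, keyeq _ (Real.sin_arcsin (by linarith) hc1), keyeq _ ?_⟩
  · rintro θ ⟨h1, h2⟩
    have hupper : π / 2 + Real.arccos c = π - Real.arcsin c := by
      rw [Real.arccos]; ring
    rw [hupper] at h2
    apply key
    have hsinc : Real.sin (Real.arcsin c) = c := Real.sin_arcsin (by linarith) hc1
    have ha0 : 0 < Real.arcsin c := Real.arcsin_pos.mpr hc0
    have ha2 : Real.arcsin c ≤ π / 2 := Real.arcsin_le_pi_div_two c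
    rcases le_or_gt θ (π / 2) with hθ | hθ
    · have := Real.sin_lt_sin_of_lt_of_le_pi_div_two (by linarith [Real.arcsin_le_pi_div_two c, Real.pi_pos] : -(π/2) ≤ Real.arcsin c) hθ h1
      linarith [hsinc]
    · have h3 : Real.arcsin c < π - θ := by linarith
      have h4 : π - θ ≤ π / 2 := by linarith
      have := Real.sin_lt_sin_of_lt_of_le_pi_div_two (by linarith : -(π/2) ≤ Real.arcsin c) h4 h3
      rw [Real.sin_pi_sub] at this
      linarith [hsinc]
  · rw [Real.sin_add, Real.sin_pi_div_two, Real.cos_pi_div_two,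
      Real.cos_arccos (by linarith) hc1]
    ring
end

section
/- Let 𝒯¹ : I₁ → ℝ ∪ {∞} for 𝒯 ∈ {RS, SL, RL} and suppose for a CSC path P(θ₁, θ₂) (e.g., RSL) the identities: (i) for every θ₁, min over θ₂ ∈ I₂ of P(θ₁,θ₂) = min{P(θ₁,θ₂^min), P(θ₁,θ₂^max), RS¹(θ₁), SL¹(θ₁), RL¹(θ₁)}; (ii) for θ₂ ∈ {θ₂^min, θ₂^max}, min over θ₁ ∈ I₁ of P(θ₁,θ₂) = min{P(θ₁^min,θ₂), P(θ₁^max,θ₂), RS²(θ₂), SL²(θ₂), RL²(θ₂)}; (iii) for 𝒯 ∈ {RS,SL,RL}, min over I₁ of 𝒯¹ ≤ 𝒯²(θ₂^min) and min over I₁ of 𝒯¹ ≤ 𝒯²(θ₂^max). Then min over (θ₁,θ₂) ∈ I₁×I₂ of P equals min{P*, min over θ₁∈I₁ of min{RS¹(θ₁), SL¹(θ₁), RL¹(θ₁)}}, where P* = min{P(θ₁^min,θ₂^min), P(θ₁^max,θ₂^min), P(θ₁^min,θ₂^max), P(θ₁^max,θ₂^max)}. -/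
open Set ENNReal

/-- Key reduction step: given the boundary/degenerate decomposition of the inner
minimization and the two-segment comparison inequalities, the double minimization
of a CSC path length reduces to corner evaluations plus two-segment path
optimizations. -/
theorem csc_double_min_reduction
    (t1min t1max t2min t2max : ℝ) (h₁ : t1min ≤ t1max) (h₂ : t2min ≤ t2max)
    (P : ℝ → ℝ → ℝ≥0∞)
    (RS1 SL1 RL1 RS2 SL2 RL2 : ℝ → ℝ≥0∞)
    (hi : ∀ θ₁, (⨅ θ₂ ∈ Icc t2min t2max, P θ₁ θ₂) =
      min (min (P θ₁ t2min) (P θ₁ t2max)) (min (RS1 θ₁) (min (SL1 θ₁) (RL1 θ₁))))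
    (hii : ∀ θ₂ ∈ ({t2min, t2max} : Set ℝ),
      (⨅ θ₁ ∈ Icc t1min t1max, P θ₁ θ₂) =
      min (min (P t1min θ₂) (P t1max θ₂)) (min (RS2 θ₂) (min (SL2 θ₂) (RL2 θ₂))))
    (hiii₁ : (⨅ θ₁ ∈ Icc t1min t1max, RS1 θ₁) ≤ RS2 t2min ∧
             (⨅ θ₁ ∈ Icc t1min t1max, RS1 θ₁) ≤ RS2 t2max)
    (hiii₂ : (⨅ θ₁ ∈ Icc t1min t1max, SL1 θ₁) ≤ SL2 t2min ∧
             (⨅ θ₁ ∈ Icc t1min t1max, SL1 θ₁) ≤ SL2 t2max)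
    (hiii₃ : (⨅ θ₁ ∈ Icc t1min t1max, RL1 θ₁) ≤ RL2 t2min ∧
             (⨅ θ₁ ∈ Icc t1min t1max, RL1 θ₁) ≤ RL2 t2max) :
    (⨅ θ₁ ∈ Icc t1min t1max, ⨅ θ₂ ∈ Icc t2min t2max, P θ₁ θ₂) =
      min (min (min (P t1min t2min) (P t1max t2min))
               (min (P t1min t2max) (P t1max t2max)))
          (⨅ θ₁ ∈ Icc t1min t1max, min (RS1 θ₁) (min (SL1 θ₁) (RL1 θ₁))) := by
  have key : ∀ (f g : ℝ → ℝ≥0∞),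
      (⨅ θ ∈ Icc t1min t1max, min (f θ) (g θ)) =
      min (⨅ θ ∈ Icc t1min t1max, f θ) (⨅ θ ∈ Icc t1min t1max, g θ) := by
    intro f g
    apply le_antisymm
    · exact le_min (iInf₂_mono fun θ _ => min_le_left _ _)
        (iInf₂_mono fun θ _ => min_le_right _ _)
    · refine le_iInf₂ fun θ hθ => le_min ?_ ?_
      · exact (min_le_left _ _).trans (biInf_le f hθ)
      · exact (min_le_right _ _).trans (biInf_le g hθ)
  simp_rw [hi]
  rw [key, key]
  rw [hii t2min (Or.inl rfl), hii t2max (Or.inr rfl)]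
  set G := ⨅ θ ∈ Icc t1min t1max, min (RS1 θ) (min (SL1 θ) (RL1 θ)) with hG
  have hR : G ≤ ⨅ θ ∈ Icc t1min t1max, RS1 θ :=
    iInf₂_mono fun θ _ => min_le_left _ _
  have hS : G ≤ ⨅ θ ∈ Icc t1min t1max, SL1 θ :=
    iInf₂_mono fun θ _ => (min_le_right _ _).trans (min_le_left _ _)
  have hL : G ≤ ⨅ θ ∈ Icc t1min t1max, RL1 θ :=
    iInf₂_mono fun θ _ => (min_le_right _ _).trans (min_le_right _ _)
  have hGa : G ≤ min (RS2 t2min) (min (SL2 t2min) (RL2 t2min)) :=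
    le_min (hR.trans hiii₁.1) (le_min (hS.trans hiii₂.1) (hL.trans hiii₃.1))
  have hGb : G ≤ min (RS2 t2max) (min (SL2 t2max) (RL2 t2max)) :=
    le_min (hR.trans hiii₁.2) (le_min (hS.trans hiii₂.2) (hL.trans hiii₃.2))
  apply le_antisymm
  · refine le_min (le_min ?_ ?_) (min_le_right _ _)
    · exact (min_le_left _ _).trans ((min_le_left _ _).trans (min_le_left _ _))
    · exact (min_le_left _ _).trans ((min_le_right _ _).trans (min_le_left _ _))
  · refine le_min (le_min ?_ ?_) (min_le_right _ _)
    · exact le_min ((min_le_left _ _).trans (min_le_left _ _))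
        ((min_le_right _ _).trans hGa)
    · exact le_min ((min_le_left _ _).trans (min_le_right _ _))
        ((min_le_right _ _).trans hGb)
end
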